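/- For all a, d > 0, b ≥ 0, and natural numbers m, k, there exists C_{k,m} > 0 such that ∫_0^a x^m (log₊(d/(b+x)))^k dx ≤ C_{k,m} a^{m+1} (1 + (log₊(d/(a+b)))^k). -/
import Mathlib

open MeasureTheory Set

noncomputable def logPlus (x : ℝ) : ℝ := Real.log (max 1 x)

lemma logPlus_nonneg (x : ℝ) : 0 ≤ logPlus x :=
  Real.log_nonneg (le_max_left _ _)

lemma logPlus_mono {x y : ℝ} (h : x ≤ y) : logPlus x ≤ logPlus y :=
  Real.log_le_log (lt_of_lt_of_le one_pos (le_max_left _ _)) (max_le_max le_rfl h)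

lemma logPlus_mul_le {x y : ℝ} (hx : 0 ≤ x) (hy : 0 ≤ y) :
    logPlus (x * y) ≤ logPlus x + logPlus y := by
  unfold logPlus
  rw [← Real.log_mul (by positivity) (by positivity)]
  apply Real.log_le_log (by positivity)
  have h1 : (1:ℝ) ≤ max 1 x := le_max_left _ _
  have h2 : (1:ℝ) ≤ max 1 y := le_max_left _ _
  have h3 : x ≤ max 1 x := le_max_right _ _
  have h4 : y ≤ max 1 y := le_max_right _ _
  apply max_le
  · nlinarith
  · exact mul_le_mul h3 h4 hy (le_trans zero_le_one h1)

lemma logPlus_le_rpow {t c : ℝ} (hc : 0 < c) (ht : 1 ≤ t) :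
    logPlus t ≤ c * t ^ (c⁻¹ : ℝ) := by
  have ht0 : 0 < t := lt_of_lt_of_le one_pos ht
  have heq : logPlus t = Real.log t := by unfold logPlus; rw [max_eq_right ht]
  have h2 : Real.log (t ^ (c⁻¹ : ℝ)) = c⁻¹ * Real.log t := Real.log_rpow ht0 _
  have h : Real.log (t ^ (c⁻¹ : ℝ)) ≤ t ^ (c⁻¹ : ℝ) :=
    Real.log_le_self (le_of_lt (Real.rpow_pos_of_pos ht0 _))
  rw [heq]
  calc Real.log t = c * (c⁻¹ * Real.log t) := by field_simp
    _ ≤ c * t ^ (c⁻¹ : ℝ) := by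
        apply mul_le_mul_of_nonneg_left _ hc.le
        rw [← h2]; exact h

lemma add_pow_le_two_pow {u v : ℝ} (hu : 0 ≤ u) (hv : 0 ≤ v) (k : ℕ) :
    (u + v) ^ k ≤ 2 ^ k * (u ^ k + v ^ k) := by
  have h2 : (0:ℝ) ≤ 2 ^ k := by positivity
  rcases le_total u v with h | h
  · calc (u + v) ^ k ≤ (2 * v) ^ k := pow_le_pow_left₀ (by linarith) (by linarith) k
      _ = 2 ^ k * v ^ k := mul_pow 2 v k
      _ ≤ 2 ^ k * (u ^ k + v ^ k) := by nlinarith [pow_nonneg hu k, pow_nonneg hv k]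
  · calc (u + v) ^ k ≤ (2 * u) ^ k := pow_le_pow_left₀ (by linarith) (by linarith) k
      _ = 2 ^ k * u ^ k := mul_pow 2 u k
      _ ≤ 2 ^ k * (u ^ k + v ^ k) := by nlinarith [pow_nonneg hu k, pow_nonneg hv k]

set_option maxHeartbeats 1000000 in
theorem stmt_9 (k m : ℕ) :
    ∃ C : ℝ, 0 < C ∧ ∀ a b d : ℝ, 0 < a → 0 < d → 0 ≤ b →
      (∫ x in (0:ℝ)..a, x ^ m * (logPlus (d / (b + x))) ^ k) ≤
        C * a ^ (m + 1) * (1 + (logPlus (d / (a + b))) ^ k) := by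
  set c : ℝ := 2 * (k + 1) with hc
  have hc0 : 0 < c := by positivity
  refine ⟨2 ^ k * (1 + 2 * c ^ k), by positivity, ?_⟩
  intro a b d ha hd hb
  set L : ℝ := logPlus (d / (a + b)) with hLdef
  have hL0 : 0 ≤ L := logPlus_nonneg _
  set r : ℝ := c⁻¹ * k with hrdef
  have hr0 : 0 ≤ r := by positivity
  have hrhalf : r ≤ 1 / 2 := by
    rw [hrdef, hc, inv_mul_eq_div, div_le_iff₀ (by positivity)]
    push_cast; nlinarith [Nat.cast_nonneg (α := ℝ) k]
  have hexp : (-1 : ℝ) < (m : ℝ) - r := by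
    have := Nat.cast_nonneg (α := ℝ) m
    linarith
  set A : ℝ := 2 ^ k * L ^ k with hA
  set B : ℝ := 2 ^ k * c ^ k * a ^ (r : ℝ) with hB
  have hA0 : 0 ≤ A := by positivity
  have hB0 : 0 ≤ B := by positivity
  -- pointwise bound on Ioc 0 a
  have hkey : ∀ x ∈ Ioc (0:ℝ) a,
      x ^ m * logPlus (d / (b + x)) ^ k ≤ A * x ^ m + B * x ^ ((m : ℝ) - r) := by
    rintro x ⟨hx0, hxa⟩
    have hbx : 0 < b + x := by linarith
    have hab : 0 < a + b := by linarith
    have h1 : d / (b + x) = (d / (a + b)) * ((a + b) / (b + x)) := by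
      field_simp
    have h2 : logPlus (d / (b + x)) ≤ L + logPlus ((a + b) / (b + x)) := by
      rw [h1]; exact logPlus_mul_le (by positivity) (by positivity)
    have h3 : (a + b) / (b + x) ≤ a / x := by
      rw [div_le_div_iff₀ hbx hx0]; nlinarith
    have h4 : (1:ℝ) ≤ a / x := (one_le_div hx0).mpr hxa
    have h5 : logPlus (d / (b + x)) ≤ L + c * (a / x) ^ (c⁻¹ : ℝ) := by
      have ha1 := logPlus_le_rpow hc0 h4
      have ha2 := logPlus_mono h3
      linarith
    have hax0 : 0 ≤ (a / x) ^ (c⁻¹ : ℝ) := Real.rpow_nonneg (by positivity) _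
    have h6 : logPlus (d / (b + x)) ^ k ≤ 2 ^ k * (L ^ k + (c * (a / x) ^ (c⁻¹ : ℝ)) ^ k) := by
      calc logPlus (d / (b + x)) ^ k ≤ (L + c * (a / x) ^ (c⁻¹ : ℝ)) ^ k :=
            pow_le_pow_left₀ (logPlus_nonneg _) h5 k
        _ ≤ _ := add_pow_le_two_pow hL0 (by positivity) k
    have h7 : (c * (a / x) ^ (c⁻¹ : ℝ)) ^ k = c ^ k * (a / x) ^ (r : ℝ) := by
      rw [mul_pow, ← Real.rpow_natCast ((a / x) ^ (c⁻¹ : ℝ)) k,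
        ← Real.rpow_mul (by positivity), hrdef]
    have h8 : x ^ m * (a / x) ^ (r : ℝ) = x ^ ((m : ℝ) - r) * a ^ (r : ℝ) := by
      rw [Real.div_rpow ha.le hx0.le, Real.rpow_sub hx0, ← Real.rpow_natCast x m]
      field_simp
    have hxm : 0 ≤ x ^ m := pow_nonneg hx0.le m
    calc x ^ m * logPlus (d / (b + x)) ^ k
        ≤ x ^ m * (2 ^ k * (L ^ k + (c * (a / x) ^ (c⁻¹ : ℝ)) ^ k)) :=
          mul_le_mul_of_nonneg_left h6 hxm
      _ = 2 ^ k * L ^ k * x ^ m + 2 ^ k * c ^ k * (x ^ m * (a / x) ^ (r : ℝ)) := by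
          rw [h7]; ring
      _ = A * x ^ m + B * x ^ ((m : ℝ) - r) := by
          rw [h8, hA, hB]; ring
  -- integrability
  have hf_meas : AEStronglyMeasurable (fun x => x ^ m * logPlus (d / (b + x)) ^ k)
      (volume.restrict (Ioc (0:ℝ) a)) := by
    apply Measurable.aestronglyMeasurable
    unfold logPlus
    have m1 : Measurable fun x : ℝ => Real.log (max 1 (d / (b + x))) :=
      Real.measurable_log.comp
        (measurable_const.max (measurable_const.div (measurable_const.add measurable_id)))
    exact (measurable_id.pow_const m).mul (m1.pow_const k)
  have hint_pow : IntegrableOn (fun x : ℝ => x ^ m) (Ioc 0 a) := by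
    rw [← intervalIntegrable_iff_integrableOn_Ioc_of_le ha.le]
    exact intervalIntegral.intervalIntegrable_pow m
  have hint_rpow : IntegrableOn (fun x : ℝ => x ^ ((m : ℝ) - r)) (Ioc 0 a) := by
    rw [← intervalIntegrable_iff_integrableOn_Ioc_of_le ha.le]
    exact intervalIntegral.intervalIntegrable_rpow' hexp
  have hg_int : IntegrableOn (fun x : ℝ => A * x ^ m + B * x ^ ((m : ℝ) - r)) (Ioc 0 a) :=
    (hint_pow.const_mul A).add (hint_rpow.const_mul B)
  have hf_int : IntegrableOn (fun x => x ^ m * logPlus (d / (b + x)) ^ k) (Ioc 0 a) := by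
    apply Integrable.mono' hg_int hf_meas
    filter_upwards [ae_restrict_mem measurableSet_Ioc] with x hx
    rw [Real.norm_eq_abs, abs_of_nonneg
      (mul_nonneg (pow_nonneg hx.1.le m) (pow_nonneg (logPlus_nonneg _) k))]
    exact hkey x hx
  have hmono := setIntegral_mono_on hf_int hg_int measurableSet_Ioc hkey
  -- compute the integrals
  have hIpow : ∫ x in Ioc (0:ℝ) a, x ^ m = a ^ (m + 1) / ((m : ℝ) + 1) := by
    rw [← intervalIntegral.integral_of_le ha.le, integral_pow]
    rw [zero_pow (Nat.succ_ne_zero m)]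
    push_cast; ring
  have hIr : ∫ x in Ioc (0:ℝ) a, x ^ ((m : ℝ) - r)
      = a ^ ((m : ℝ) - r + 1) / ((m : ℝ) - r + 1) := by
    rw [← intervalIntegral.integral_of_le ha.le, integral_rpow (Or.inl hexp)]
    rw [Real.zero_rpow (by linarith : (m : ℝ) - r + 1 ≠ 0)]
    ring
  rw [intervalIntegral.integral_of_le ha.le]
  refine hmono.trans ?_
  rw [integral_add (hint_pow.const_mul A) (hint_rpow.const_mul B),
    integral_const_mul, integral_const_mul, hIpow, hIr]
  -- final arithmetic
  have hP : (0:ℝ) < a ^ (m + 1) := pow_pos ha _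
  have hQ0 : (0:ℝ) ≤ a ^ ((m : ℝ) - r + 1) := Real.rpow_nonneg ha.le _
  have hQP : a ^ (r : ℝ) * a ^ ((m : ℝ) - r + 1) = a ^ (m + 1) := by
    rw [← Real.rpow_add ha, show r + ((m : ℝ) - r + 1) = ((m + 1 : ℕ) : ℝ) by push_cast; ring,
      Real.rpow_natCast]
  have hm1 : (1:ℝ) ≤ (m : ℝ) + 1 := by
    have := Nat.cast_nonneg (α := ℝ) m; linarith
  have hD : (1:ℝ)/2 ≤ (m : ℝ) - r + 1 := by
    have := Nat.cast_nonneg (α := ℝ) m; linarith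
  have t1 : a ^ (m + 1) / ((m : ℝ) + 1) ≤ a ^ (m + 1) := by
    apply div_le_self hP.le hm1
  have t2 : a ^ ((m : ℝ) - r + 1) / ((m : ℝ) - r + 1) ≤ 2 * a ^ ((m : ℝ) - r + 1) := by
    rw [div_le_iff₀ (by linarith)]
    nlinarith
  have step : A * (a ^ (m + 1) / ((m : ℝ) + 1))
      + B * (a ^ ((m : ℝ) - r + 1) / ((m : ℝ) - r + 1))
      ≤ A * a ^ (m + 1) + B * (2 * a ^ ((m : ℝ) - r + 1)) := by
    exact add_le_add (mul_le_mul_of_nonneg_left t1 hA0) (mul_le_mul_of_nonneg_left t2 hB0)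
  refine step.trans ?_
  rw [hA, hB]
  have hck : (0:ℝ) < c ^ k := by positivity
  have h2k : (0:ℝ) < (2:ℝ) ^ k := by positivity
  have hLk : (0:ℝ) ≤ L ^ k := pow_nonneg hL0 k
  have key : 2 ^ k * c ^ k * a ^ (r : ℝ) * (2 * a ^ ((m : ℝ) - r + 1))
      = 2 * (2 ^ k * c ^ k) * a ^ (m + 1) := by
    rw [show 2 ^ k * c ^ k * a ^ (r : ℝ) * (2 * a ^ ((m : ℝ) - r + 1))
        = 2 * (2 ^ k * c ^ k) * (a ^ (r : ℝ) * a ^ ((m : ℝ) - r + 1)) by ring, hQP]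
  rw [key]
  nlinarith [mul_nonneg (mul_nonneg h2k.le hck.le) (mul_nonneg hLk hP.le),
    mul_pos h2k hP]
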